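/- arXiv:2509.21912 — 2 statements merged into one kernel-verified Lean document; each statement's English description precedes it below -/
import Mathlib

section
/- (Guidance for discrete flow matching, coordinate marginal rates.) Under the common-conditional-path setup with coordinate-marginal posteriors, fix x ∈ Ω with p_t(x) > 0 and q_t(x) > 0, let m(x) = Σ_{x₁∈Ω} r(x₁) p_{1|t}(x₁|x) (> 0), and for d ∈ Fin D, s ∈ S with p^d_{1|t}(s|x) > 0 set h(d, s, x) = (Σ_{x₁ : x₁(d) = s} r(x₁) p_{1|t}(x₁|x)) / p^d_{1|t}(s|x). Let u^d : S × S × S → ℝ be coordinate conditional rates and define the marginal rates u^{p,d}(z_d, x) = Σ_{s∈S} u^d(z_d, x(d) | s) p^d_{1|t}(s|x) and u^{q,d}(z_d, x) = Σ_{s∈S} u^d(z_d, x(d) | s) q^d_{1|t}(s|x). Then for every d and z_d ∈ S: u^{q,d}(z_d, x) = u^{p,d}(z_d, x) + Σ_{s∈S} (h(d, s, x)/m(x) − 1) · u^d(z_d, x(d) | s) · p^d_{1|t}(s|x), where summands with p^d_{1|t}(s|x) = 0 are 0. -/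
/-!
Reweighting the source by the density ratio `r` turns the source posterior into the target one:
`q_{1|t}(x₁|x) = r(x₁) p_{1|t}(x₁|x) / m(x)`, because `r p₁ = q₁` and `m(x) = q_t(x) / p_t(x)`.
Summing over the fibre `x₁ d = s` gives `q^d_{1|t}(s|x) = h(d,s,x) p^d_{1|t}(s|x) / m(x)`, where on
an empty fibre (`p^d_{1|t}(s|x) = 0`) both sides vanish since the posterior weights are nonnegative.
The rate identity is then a termwise rearrangement.
-/

open Finset

lemma densityRatio_mul_eq {α : Type*} {p q r : α → ℝ} (hq : ∀ a, 0 ≤ q a)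
    (hac : ∀ a, 0 < q a → 0 < p a) (hr : ∀ a, r a = if 0 < p a then q a / p a else 0) (a : α) :
    r a * p a = q a := by
  rw [hr]
  split_ifs with hp
  · field_simp
  · have hq0 : ¬ 0 < q a := fun h => hp (hac a h)
    linarith [hq a]

section Posterior

variable {α : Type*} {w p₁ q₁ r p1t q1t : α → ℝ} {pt qt : ℝ}

lemma sum_ratio_mul_posterior [Fintype α] (hrq : ∀ a, r a * p₁ a = q₁ a)
    (hqt : qt = ∑ a, w a * q₁ a) (hp1t : ∀ a, p1t a = w a * p₁ a / pt) :
    ∑ a, r a * p1t a = qt / pt := by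
  rw [hqt, sum_div]
  refine sum_congr rfl fun a _ => ?_
  rw [hp1t, ← hrq]
  ring

lemma posterior_eq_ratio_mul_posterior_div (hrq : ∀ a, r a * p₁ a = q₁ a) (hpt : pt ≠ 0)
    (hp1t : ∀ a, p1t a = w a * p₁ a / pt) (hq1t : ∀ a, q1t a = w a * q₁ a / qt) (a : α) :
    q1t a = r a * p1t a / (qt / pt) := by
  rw [hq1t, hp1t, ← hrq]
  field_simp

end Posterior

lemma sum_mul_eq_mean_mul_sum {ι : Type*} (s : Finset ι) {g p : ι → ℝ} (hp : ∀ i ∈ s, 0 ≤ p i)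
    {c : ℝ} (hc : 0 < ∑ i ∈ s, p i → c = (∑ i ∈ s, g i * p i) / ∑ i ∈ s, p i) :
    ∑ i ∈ s, g i * p i = c * ∑ i ∈ s, p i := by
  rcases (sum_nonneg hp).lt_or_eq with hpos | hzero
  · rw [hc hpos, div_mul_cancel₀ _ hpos.ne']
  · have hp0 : ∀ i ∈ s, p i = 0 := (sum_eq_zero_iff_of_nonneg hp).mp hzero.symm
    rw [← hzero, mul_zero]
    exact sum_eq_zero fun i hi => by rw [hp0 i hi, mul_zero]

theorem discrete_flow_matching_guidance_rates_general
    {S : Type*} [Fintype S] [DecidableEq S] {D : ℕ}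
    (p₁ q₁ : (Fin D → S) → ℝ)
    (hp₁nonneg : ∀ x, 0 ≤ p₁ x)
    (hq₁nonneg : ∀ x, 0 ≤ q₁ x)
    (hac : ∀ x, 0 < q₁ x → 0 < p₁ x)
    (r : (Fin D → S) → ℝ)
    (hr : ∀ x, r x = if 0 < p₁ x then q₁ x / p₁ x else 0)
    (k : (Fin D → S) → (Fin D → S) → ℝ)
    (hknonneg : ∀ x x₁, 0 ≤ k x x₁)
    (pt qt : (Fin D → S) → ℝ)
    (hqt : ∀ x, qt x = ∑ x₁, k x x₁ * q₁ x₁)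
    (p1t q1t : (Fin D → S) → (Fin D → S) → ℝ)
    (hp1t : ∀ x₁ x, 0 < pt x → p1t x₁ x = k x x₁ * p₁ x₁ / pt x)
    (hq1t : ∀ x₁ x, 0 < qt x → q1t x₁ x = k x x₁ * q₁ x₁ / qt x)
    (pd qd : Fin D → S → (Fin D → S) → ℝ)
    (hpd : ∀ d s x, pd d s x = ∑ x₁ ∈ Finset.univ.filter (fun x₁ => x₁ d = s), p1t x₁ x)
    (hqd : ∀ d s x, qd d s x = ∑ x₁ ∈ Finset.univ.filter (fun x₁ => x₁ d = s), q1t x₁ x)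
    (x : Fin D → S) (hptpos : 0 < pt x) (hqtpos : 0 < qt x)
    (m : ℝ) (hmdef : m = ∑ x₁, r x₁ * p1t x₁ x)
    (h : Fin D → S → (Fin D → S) → ℝ)
    (hh : ∀ d s, 0 < pd d s x →
      h d s x = (∑ x₁ ∈ Finset.univ.filter (fun x₁ => x₁ d = s), r x₁ * p1t x₁ x) /
        pd d s x)
    (ud : Fin D → S → S → S → ℝ) :
    ∀ (d : Fin D) (zd : S),
      ∑ s, ud d zd (x d) s * qd d s x =
        (∑ s, ud d zd (x d) s * pd d s x) +
          ∑ s, (h d s x / m - 1) * ud d zd (x d) s * pd d s x := by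
  have hrq := densityRatio_mul_eq hq₁nonneg hac hr
  have hm : m = qt x / pt x :=
    hmdef ▸ sum_ratio_mul_posterior hrq (hqt x) (hp1t · x hptpos)
  have hq1t_eq : ∀ x₁, q1t x₁ x = r x₁ * p1t x₁ x / m := fun x₁ =>
    hm ▸ posterior_eq_ratio_mul_posterior_div hrq hptpos.ne' (hp1t · x hptpos)
      (hq1t · x hqtpos) x₁
  have hp1t_nonneg : ∀ x₁, 0 ≤ p1t x₁ x := fun x₁ => by
    rw [hp1t x₁ x hptpos]
    exact div_nonneg (mul_nonneg (hknonneg x x₁) (hp₁nonneg x₁)) hptpos.le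
  have hqd_eq : ∀ d s, qd d s x = h d s x / m * pd d s x := fun d s => by
    rw [hqd]
    simp_rw [hq1t_eq, ← sum_div]
    rw [sum_mul_eq_mean_mul_sum _ (fun x₁ _ => hp1t_nonneg x₁) (c := h d s x), ← hpd]
    · ring
    · rw [← hpd]
      exact hh d s
  intro d zd
  rw [← sum_add_distrib]
  refine sum_congr rfl fun s _ => ?_
  rw [hqd_eq]
  ring

/-- Guidance for discrete flow matching, coordinate marginal rates:
`u^{q,d}(z_d,x) = u^{p,d}(z_d,x) + Σ_s (h(d,s,x)/m(x) − 1) u^d(z_d, x d | s) p^d_{1|t}(s|x)`. -/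
theorem discrete_flow_matching_guidance_rates
    {S : Type*} [Fintype S] [Nonempty S] [DecidableEq S] {D : ℕ} (hD : 0 < D)
    (p₁ q₁ : (Fin D → S) → ℝ)
    (hp₁nonneg : ∀ x, 0 ≤ p₁ x) (hp₁sum : ∑ x, p₁ x = 1)
    (hq₁nonneg : ∀ x, 0 ≤ q₁ x) (hq₁sum : ∑ x, q₁ x = 1)
    (hac : ∀ x, 0 < q₁ x → 0 < p₁ x)
    (r : (Fin D → S) → ℝ)
    (hr : ∀ x, r x = if 0 < p₁ x then q₁ x / p₁ x else 0)
    (k : (Fin D → S) → (Fin D → S) → ℝ)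
    (hknonneg : ∀ x x₁, 0 ≤ k x x₁) (hksum : ∀ x₁, ∑ x, k x x₁ = 1)
    (pt qt : (Fin D → S) → ℝ)
    (hpt : ∀ x, pt x = ∑ x₁, k x x₁ * p₁ x₁)
    (hqt : ∀ x, qt x = ∑ x₁, k x x₁ * q₁ x₁)
    (p1t q1t : (Fin D → S) → (Fin D → S) → ℝ)
    (hp1t : ∀ x₁ x, 0 < pt x → p1t x₁ x = k x x₁ * p₁ x₁ / pt x)
    (hq1t : ∀ x₁ x, 0 < qt x → q1t x₁ x = k x x₁ * q₁ x₁ / qt x)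
    (pd qd : Fin D → S → (Fin D → S) → ℝ)
    (hpd : ∀ d s x, pd d s x = ∑ x₁ ∈ Finset.univ.filter (fun x₁ => x₁ d = s), p1t x₁ x)
    (hqd : ∀ d s x, qd d s x = ∑ x₁ ∈ Finset.univ.filter (fun x₁ => x₁ d = s), q1t x₁ x)
    (x : Fin D → S) (hptpos : 0 < pt x) (hqtpos : 0 < qt x)
    (m : ℝ) (hmdef : m = ∑ x₁, r x₁ * p1t x₁ x) (hmpos : 0 < m)
    (h : Fin D → S → (Fin D → S) → ℝ)
    (hh : ∀ d s, 0 < pd d s x →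
      h d s x = (∑ x₁ ∈ Finset.univ.filter (fun x₁ => x₁ d = s), r x₁ * p1t x₁ x) /
        pd d s x)
    (ud : Fin D → S → S → S → ℝ) :
    ∀ (d : Fin D) (zd : S),
      ∑ s, ud d zd (x d) s * qd d s x =
        (∑ s, ud d zd (x d) s * pd d s x) +
          ∑ s, (h d s x / m - 1) * ud d zd (x d) s * pd d s x :=
  discrete_flow_matching_guidance_rates_general p₁ q₁ hp₁nonneg hq₁nonneg hac r hr k hknonneg pt qt
    hqt p1t q1t hp1t hq1t pd qd hpd hqd x hptpos hqtpos m hmdef h hh ud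
end

section
/- (Discrete-time guidance.) Let Ω be a nonempty finite set, p₁, q₁ pmfs on Ω with q₁ absolutely continuous with respect to p₁, r the density ratio (r = q₁/p₁ on the support of p₁, 0 elsewhere), and let k, k' be two Markov kernels from Ω to pmfs on Ω (the shared conditional probability paths at times t and t + h). Define p_t, q_t from k and p_{t+h}, q_{t+h} from k' by mixing against p₁ and q₁ respectively, with posteriors p_{1|t}(x₁|x) = k(x|x₁)p₁(x₁)/p_t(x) and p_{1|t+h}(x₁|z) = k'(z|x₁)p₁(x₁)/p_{t+h}(z). Let P, Q be forward transition kernels with p_{t+h}(z) = Σ_x P(z|x) p_t(x), q_{t+h}(z) = Σ_x Q(z|x) q_t(x), and equal backward conditionals: P(z|x) p_t(x)/p_{t+h}(z) = Q(z|x) q_t(x)/q_{t+h}(z) whenever the denominators are positive. Then for all x, z with p_t(x), q_t(x), p_{t+h}(z), q_{t+h}(z) all positive: Q(z|x) = ((Σ_{x₁} r(x₁) p_{1|t+h}(x₁|z)) / (Σ_{x₁} r(x₁) p_{1|t}(x₁|x))) · P(z|x). -/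
open Finset

/-! The guidance sums are posterior expectations of the density ratio, and since `r · p₁ = q₁`
they collapse to the marginal ratios `q_{t+h}(z) / p_{t+h}(z)` and `q_t(x) / p_t(x)`. Equality of
the backward conditionals is then exactly the claimed identity between `Q(z|x)` and `P(z|x)`. -/

lemma densityRatio_mul_self {p q : ℝ} (hp : 0 ≤ p) (hq : 0 ≤ q) (hac : 0 < q → 0 < p) :
    (if 0 < p then q / p else 0) * p = q := by
  split_ifs with hpos
  · exact div_mul_cancel₀ q hpos.ne'
  · have hp0 : p = 0 := le_antisymm (not_lt.mp hpos) hp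
    have hq0 : q = 0 := le_antisymm (not_lt.mp (mt hac hpos)) hq
    simp [hp0, hq0]

lemma sum_mul_posterior_eq_div {ι : Type*} (s : Finset ι) {r p q c : ι → ℝ} (m : ℝ)
    (hrp : ∀ i, r i * p i = q i) :
    ∑ i ∈ s, r i * (c i * p i / m) = (∑ i ∈ s, c i * q i) / m := by
  rw [sum_div]
  refine sum_congr rfl fun i _ => ?_
  rw [← hrp i]
  ring

lemma eq_ratio_mul_of_backward_eq {P Q pt qt pth qth : ℝ}
    (hqt : qt ≠ 0) (hpth : pth ≠ 0) (hqth : qth ≠ 0)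
    (hback : P * pt / pth = Q * qt / qth) :
    Q = (qth / pth) / (qt / pt) * P := by
  field_simp at hback ⊢
  linarith

theorem discrete_time_guidance_general
    {Ω : Type*} [Fintype Ω]
    (p₁ q₁ : Ω → ℝ)
    (hp₁nonneg : ∀ x, 0 ≤ p₁ x)
    (hq₁nonneg : ∀ x, 0 ≤ q₁ x)
    (hac : ∀ x, 0 < q₁ x → 0 < p₁ x)
    (r : Ω → ℝ)
    (hr : ∀ x, r x = if 0 < p₁ x then q₁ x / p₁ x else 0)
    (k k' : Ω → Ω → ℝ)
    (pt qt pth qth : Ω → ℝ)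
    (hqt : ∀ x, qt x = ∑ x₁, k x x₁ * q₁ x₁)
    (hqth : ∀ z, qth z = ∑ x₁, k' z x₁ * q₁ x₁)
    (P Q : Ω → Ω → ℝ)
    (hback : ∀ x z, 0 < pth z → 0 < qth z →
      P z x * pt x / pth z = Q z x * qt x / qth z) :
    ∀ x z, 0 < pt x → 0 < qt x → 0 < pth z → 0 < qth z →
      Q z x = ((∑ x₁, r x₁ * (k' z x₁ * p₁ x₁ / pth z)) /
          (∑ x₁, r x₁ * (k x x₁ * p₁ x₁ / pt x))) * P z x := by
  intro x z hptx hqtx hpthz hqthz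
  have hrp : ∀ y, r y * p₁ y = q₁ y := fun y => by
    rw [hr y]
    exact densityRatio_mul_self (hp₁nonneg y) (hq₁nonneg y) (hac y)
  rw [sum_mul_posterior_eq_div _ _ hrp, sum_mul_posterior_eq_div _ _ hrp, ← hqt, ← hqth]
  exact eq_ratio_mul_of_backward_eq hqtx.ne' hpthz.ne' hqthz.ne'
    (hback x z hpthz hqthz)

/-- Discrete-time guidance: under equal backward conditionals,
`Q(z|x) = ((Σ_{x₁} r x₁ p_{1|t+h}(x₁|z)) / (Σ_{x₁} r x₁ p_{1|t}(x₁|x))) · P(z|x)`. -/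
theorem discrete_time_guidance
    {Ω : Type*} [Fintype Ω] [Nonempty Ω]
    (p₁ q₁ : Ω → ℝ)
    (hp₁nonneg : ∀ x, 0 ≤ p₁ x) (hp₁sum : ∑ x, p₁ x = 1)
    (hq₁nonneg : ∀ x, 0 ≤ q₁ x) (hq₁sum : ∑ x, q₁ x = 1)
    (hac : ∀ x, 0 < q₁ x → 0 < p₁ x)
    (r : Ω → ℝ)
    (hr : ∀ x, r x = if 0 < p₁ x then q₁ x / p₁ x else 0)
    (k k' : Ω → Ω → ℝ)
    (hknonneg : ∀ x x₁, 0 ≤ k x x₁) (hksum : ∀ x₁, ∑ x, k x x₁ = 1)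
    (hk'nonneg : ∀ x x₁, 0 ≤ k' x x₁) (hk'sum : ∀ x₁, ∑ x, k' x x₁ = 1)
    (pt qt pth qth : Ω → ℝ)
    (hpt : ∀ x, pt x = ∑ x₁, k x x₁ * p₁ x₁)
    (hqt : ∀ x, qt x = ∑ x₁, k x x₁ * q₁ x₁)
    (hpth : ∀ z, pth z = ∑ x₁, k' z x₁ * p₁ x₁)
    (hqth : ∀ z, qth z = ∑ x₁, k' z x₁ * q₁ x₁)
    (P Q : Ω → Ω → ℝ)
    (hPnonneg : ∀ z x, 0 ≤ P z x) (hPsum : ∀ x, ∑ z, P z x = 1)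
    (hQnonneg : ∀ z x, 0 ≤ Q z x) (hQsum : ∀ x, ∑ z, Q z x = 1)
    (hPmarg : ∀ z, pth z = ∑ x, P z x * pt x)
    (hQmarg : ∀ z, qth z = ∑ x, Q z x * qt x)
    (hback : ∀ x z, 0 < pth z → 0 < qth z →
      P z x * pt x / pth z = Q z x * qt x / qth z) :
    ∀ x z, 0 < pt x → 0 < qt x → 0 < pth z → 0 < qth z →
      Q z x = ((∑ x₁, r x₁ * (k' z x₁ * p₁ x₁ / pth z)) /
          (∑ x₁, r x₁ * (k x x₁ * p₁ x₁ / pt x))) * P z x :=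
  discrete_time_guidance_general p₁ q₁ hp₁nonneg hq₁nonneg hac r hr k k' pt qt pth qth hqt hqth P Q
    hback
end
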